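/- (Spectral-gap decoupling estimate.) Let Φ be a gapped transfer operator on M_d(ℂ) as below, let H_R be a finite-dimensional Hilbert space, let ρ be any density matrix on ℂ^d ⊗ H_R with marginals ρ^A = tr_R ρ and ρ^R = tr_{ℂ^d} ρ, and let m ≥ 1 be an integer. Then for all operators O_A ∈ M_d(ℂ) and O_R ∈ B(H_R): |tr[(ρ − ρ^A ⊗ ρ^R)(Φ^m(O_A) ⊗ O_R)]| ≤ 2K ‖O_A‖ ‖O_R‖ 2^{−νm}, where ‖·‖ is the operator norm. -/

import Mathlib

open scoped Kronecker ComplexOrder Matrix Classical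

/-- The operator norm of a matrix, i.e. the norm of the induced linear map on Euclidean space. -/
noncomputable def opNorm {n : Type} [Fintype n] [DecidableEq n] (A : Matrix n n ℂ) : ℝ :=
  ‖Matrix.toEuclideanCLM (𝕜 := ℂ) A‖

/-- The positive-semidefinite square root (junk value `0` off the PSD cone). -/
noncomputable def psdSqrt {n : Type} [Fintype n] [DecidableEq n] (A : Matrix n n ℂ) :
    Matrix n n ℂ :=
  if h : A.PosSemidef then
    (h.1.eigenvectorUnitary : Matrix n n ℂ) *
      Matrix.diagonal ((↑) ∘ Real.sqrt ∘ h.1.eigenvalues : n → ℂ) *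
      (star h.1.eigenvectorUnitary : Matrix n n ℂ)
  else 0

/-- The trace norm `‖A‖₁ = tr √(AᴴA)`. -/
noncomputable def traceNorm {n : Type} [Fintype n] [DecidableEq n] (A : Matrix n n ℂ) : ℝ :=
  ((psdSqrt (Aᴴ * A)).trace).re

/-- Fidelity `F(ρ,σ) = tr √(√ρ σ √ρ)`. -/
noncomputable def fidelity {n : Type} [Fintype n] [DecidableEq n] (ρ σ : Matrix n n ℂ) : ℝ :=
  ((psdSqrt (psdSqrt ρ * σ * psdSqrt ρ)).trace).re

/-- Bures distance `𝔅(ρ,σ) = √(2(1 − F(ρ,σ)))`. -/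
noncomputable def bures {n : Type} [Fintype n] [DecidableEq n] (ρ σ : Matrix n n ℂ) : ℝ :=
  Real.sqrt (2 * (1 - fidelity ρ σ))

/-- The rank-one projector `|ψ⟩⟨ψ|`. -/
def outer {n : Type} [Fintype n] (ψ : n → ℂ) : Matrix n n ℂ :=
  Matrix.of fun i j => ψ i * (starRingEnd ℂ) (ψ j)

/-- Complete positivity of a linear map between matrix algebras: for every `k`, the map
`id_{M_k} ⊗ Φ` (acting blockwise) preserves positive semidefiniteness. -/
def IsCompletelyPositive {n m : Type} [Fintype n] [DecidableEq n] [Fintype m] [DecidableEq m]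
    (Φ : Matrix n n ℂ →ₗ[ℂ] Matrix m m ℂ) : Prop :=
  ∀ (k : ℕ) (M : Matrix (Fin k × n) (Fin k × n) ℂ), M.PosSemidef →
    (Matrix.of fun (p q : Fin k × m) =>
      (Φ (Matrix.of fun a b => M (p.1, a) (q.1, b))) p.2 q.2).PosSemidef

/-! Biorthogonality of the `Rₖ` and `Lₖ` diagonalises `Φ`, so `Φ^m(O) = ∑ₖ λₖ^m tr(O Rₖ) Lₖ`.
Pairing `Φ^m(O_A) ⊗ O_R` with `ρ − ρ^A ⊗ ρ^R`, the `k = 0` term vanishes because `L₀ = 1` and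
both states have the same marginal on `H_R`. Each of the other `K` terms is at most
`2^{−νm} ‖O_A‖ · 2‖O_R‖`, by Hölder's inequality `|tr(AB)| ≤ ‖A‖ ‖B‖₁` for `tr(O_A Rₖ)` and by
`|tr(σX)| ≤ ‖X‖` for the states `σ = ρ` and `σ = ρ^A ⊗ ρ^R`. -/

open Matrix
open scoped InnerProductSpace Matrix.Norms.L2Operator

namespace Matrix

section Kronecker

variable {n E : Type*} [Fintype n] [DecidableEq n] [Fintype E] [DecidableEq E]
variable (R : Type*) [CommSemiring R] [StarRing R]

def kroneckerOneStarAlgHom : Matrix n n R →⋆ₐ[R] Matrix (n × E) (n × E) R where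
  toFun A := A ⊗ₖ 1
  map_one' := one_kronecker_one
  map_mul' A B := by rw [← mul_kronecker_mul, one_mul]
  map_zero' := zero_kronecker _
  map_add' A B := add_kronecker _ _ _
  commutes' r := by simp [Algebra.algebraMap_eq_smul_one, smul_kronecker]
  map_star' A := by simp [star_eq_conjTranspose, conjTranspose_kronecker]

def oneKroneckerStarAlgHom : Matrix E E R →⋆ₐ[R] Matrix (n × E) (n × E) R where
  toFun B := 1 ⊗ₖ B
  map_one' := one_kronecker_one
  map_mul' A B := by rw [← mul_kronecker_mul, one_mul]
  map_zero' := kronecker_zero _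
  map_add' A B := kronecker_add _ _ _
  commutes' r := by simp [Algebra.algebraMap_eq_smul_one, kronecker_smul]
  map_star' A := by simp [star_eq_conjTranspose, conjTranspose_kronecker]

end Kronecker

section KroneckerTrace

variable {n E R : Type*} [Fintype n] [Fintype E] [CommRing R]

def partialTraceRight (ρ : Matrix (n × E) (n × E) R) : Matrix n n R :=
  of fun a a' => ∑ e, ρ (a, e) (a', e)

def partialTraceLeft (ρ : Matrix (n × E) (n × E) R) : Matrix E E R :=
  of fun e e' => ∑ a, ρ (a, e) (a, e')

theorem trace_mul_kronecker_one [DecidableEq E] (ρ : Matrix (n × E) (n × E) R) (M : Matrix n n R) :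
    (ρ * (M ⊗ₖ 1)).trace = (partialTraceRight ρ * M).trace := by
  simp only [trace, diag, mul_apply, kroneckerMap_apply, one_apply, partialTraceRight, of_apply,
    Fintype.sum_prod_type, mul_ite, mul_one, mul_zero, Finset.sum_ite_eq', Finset.mem_univ,
    if_true, Finset.sum_mul]
  exact Finset.sum_congr rfl fun a _ => Finset.sum_comm

theorem trace_mul_one_kronecker [DecidableEq n] (ρ : Matrix (n × E) (n × E) R) (N : Matrix E E R) :
    (ρ * (1 ⊗ₖ N)).trace = (partialTraceLeft ρ * N).trace := by
  simp only [trace, diag, mul_apply, kroneckerMap_apply, one_apply, partialTraceLeft, of_apply,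
    Fintype.sum_prod_type, Finset.sum_mul]
  rw [Finset.sum_comm]
  refine Finset.sum_congr rfl fun e _ => ?_
  rw [Finset.sum_comm (s := Finset.univ (α := E))]
  refine Finset.sum_congr rfl fun a _ => ?_
  rw [Finset.sum_comm]
  simp

theorem trace_partialTraceRight [DecidableEq n] [DecidableEq E] (ρ : Matrix (n × E) (n × E) R) :
    (partialTraceRight ρ).trace = ρ.trace := by
  rw [← mul_one (partialTraceRight ρ), ← trace_mul_kronecker_one, one_kronecker_one, mul_one]

theorem trace_sub_kronecker_partialTrace_mul_one_kronecker [DecidableEq n] [DecidableEq E]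
    {ρ : Matrix (n × E) (n × E) R} (hρ : ρ.trace = 1) (N : Matrix E E R) :
    ((ρ - partialTraceRight ρ ⊗ₖ partialTraceLeft ρ) * (1 ⊗ₖ N)).trace = 0 := by
  rw [Matrix.sub_mul, trace_sub, trace_mul_one_kronecker, ← mul_kronecker_mul, trace_kronecker,
    mul_one, trace_partialTraceRight, hρ, one_mul, sub_self]

theorem trace_mul_sum_smul_kronecker {ι : Type*} [Fintype ι] (X : Matrix (n × E) (n × E) R)
    (c : ι → R) (L : ι → Matrix n n R) (N : Matrix E E R) :
    (X * ((∑ k, c k • L k) ⊗ₖ N)).trace = ∑ k, c k * (X * (L k ⊗ₖ N)).trace := by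
  have h : (∑ k, c k • L k) ⊗ₖ N = ∑ k, c k • (L k ⊗ₖ N) := by
    ext i j
    simp [Matrix.sum_apply, Finset.sum_mul, mul_assoc]
  simp [h, Matrix.mul_sum, trace_sum]

end KroneckerTrace

theorem iterate_eq_sum_pow_smul {n ι 𝕜 : Type*} [Fintype n] [Fintype ι] [DecidableEq ι]
    [CommSemiring 𝕜] (lam : ι → 𝕜) (L R : ι → Matrix n n 𝕜)
    (hbi : ∀ k l, (L k * R l).trace = if k = l then 1 else 0)
    (Φ : Matrix n n 𝕜 → Matrix n n 𝕜) (hΦ : ∀ O, Φ O = ∑ k, (lam k * (O * R k).trace) • L k)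
    {m : ℕ} (hm : 1 ≤ m) (O : Matrix n n 𝕜) :
    Φ^[m] O = ∑ k, (lam k ^ m * (O * R k).trace) • L k := by
  have hdual : ∀ (c : ι → 𝕜) l, ((∑ k, c k • L k) * R l).trace = c l := by
    intro c l
    simp [Finset.sum_mul, trace_sum, hbi]
  induction m, hm using Nat.le_induction with
  | base => simp [hΦ]
  | succ p _ ih =>
    rw [Function.iterate_succ_apply', ih, hΦ]
    simp only [hdual, pow_succ, mul_assoc, mul_left_comm]

section OpNorm

variable {n E : Type} [Fintype n] [DecidableEq n] [Fintype E] [DecidableEq E]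

theorem opNorm_nonneg (A : Matrix n n ℂ) : 0 ≤ opNorm A := norm_nonneg A

theorem opNorm_mul_le (A B : Matrix n n ℂ) : opNorm (A * B) ≤ opNorm A * opNorm B :=
  norm_mul_le A B

-- `A ↦ A ⊗ 1` is a ⋆-homomorphism of C⋆-algebras, hence contractive.
theorem opNorm_kronecker_one_le (A : Matrix n n ℂ) :
    opNorm (A ⊗ₖ (1 : Matrix E E ℂ)) ≤ opNorm A :=
  NonUnitalStarAlgHom.norm_apply_le (kroneckerOneStarAlgHom (E := E) ℂ) A

theorem opNorm_one_kronecker_le (B : Matrix E E ℂ) :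
    opNorm ((1 : Matrix n n ℂ) ⊗ₖ B) ≤ opNorm B :=
  NonUnitalStarAlgHom.norm_apply_le (oneKroneckerStarAlgHom (n := n) ℂ) B

theorem opNorm_kronecker_le (A : Matrix n n ℂ) (B : Matrix E E ℂ) :
    opNorm (A ⊗ₖ B) ≤ opNorm A * opNorm B := by
  have hsplit : A ⊗ₖ B = (A ⊗ₖ 1) * (1 ⊗ₖ B) := by rw [← mul_kronecker_mul, mul_one, one_mul]
  calc opNorm (A ⊗ₖ B) ≤ opNorm (A ⊗ₖ (1 : Matrix E E ℂ)) * opNorm ((1 : Matrix n n ℂ) ⊗ₖ B) :=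
        hsplit ▸ opNorm_mul_le _ _
    _ ≤ opNorm A * opNorm B :=
        mul_le_mul (opNorm_kronecker_one_le A) (opNorm_one_kronecker_le B) (opNorm_nonneg _)
          (opNorm_nonneg A)

end OpNorm

section TraceInequalities

variable {n : Type} [Fintype n] [DecidableEq n]

theorem trace_eq_sum_inner (M : Matrix n n ℂ) (b : OrthonormalBasis n ℂ (EuclideanSpace ℂ n)) :
    M.trace = ∑ i, ⟪b i, toEuclideanCLM (𝕜 := ℂ) M (b i)⟫_ℂ := by
  rw [← M.trace_toLin_eq (EuclideanSpace.basisFun n ℂ).toBasis, LinearMap.trace_eq_sum_inner _ b]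
  rfl

theorem IsHermitian.toEuclideanCLM_eigenvectorBasis {A : Matrix n n ℂ} (hA : A.IsHermitian)
    (i : n) : toEuclideanCLM (𝕜 := ℂ) A (hA.eigenvectorBasis i) =
      (hA.eigenvalues i : ℂ) • hA.eigenvectorBasis i := by
  ext1
  simp [hA.mulVec_eigenvectorBasis]

theorem trace_psdSqrt {A : Matrix n n ℂ} (hA : A.PosSemidef) :
    (psdSqrt A).trace = ∑ i, (√(hA.1.eigenvalues i) : ℂ) := by
  rw [psdSqrt, dif_pos hA, trace_mul_cycle, Unitary.coe_star_mul_self, one_mul, trace_diagonal]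
  rfl

theorem norm_toEuclideanCLM_eigenvectorBasis (B : Matrix n n ℂ) (i : n) :
    ‖toEuclideanCLM (𝕜 := ℂ) B ((posSemidef_conjTranspose_mul_self B).1.eigenvectorBasis i)‖ =
      √((posSemidef_conjTranspose_mul_self B).1.eigenvalues i) := by
  set H := (posSemidef_conjTranspose_mul_self B).1
  rw [ContinuousLinearMap.apply_norm_eq_sqrt_inner_adjoint_right,
    ← ContinuousLinearMap.star_eq_adjoint, ← map_star, star_eq_conjTranspose]
  have hmul : toEuclideanCLM (𝕜 := ℂ) Bᴴ ∘L toEuclideanCLM (𝕜 := ℂ) B =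
      toEuclideanCLM (𝕜 := ℂ) (Bᴴ * B) := (map_mul _ _ _).symm
  rw [hmul, H.toEuclideanCLM_eigenvectorBasis, inner_smul_right, inner_self_eq_norm_sq_to_K,
    H.eigenvectorBasis.orthonormal.1 i]
  simp

theorem norm_inner_toEuclideanCLM_le (M : Matrix n n ℂ) {v : EuclideanSpace ℂ n} (hv : ‖v‖ = 1)
    (w : EuclideanSpace ℂ n) : ‖⟪v, toEuclideanCLM (𝕜 := ℂ) M w⟫_ℂ‖ ≤ opNorm M * ‖w‖ :=
  (norm_inner_le_norm _ _).trans <| by rw [hv, one_mul]; exact ContinuousLinearMap.le_opNorm _ _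

theorem norm_trace_mul_le_opNorm_mul_traceNorm (A B : Matrix n n ℂ) :
    ‖(A * B).trace‖ ≤ opNorm A * traceNorm B := by
  set H := (posSemidef_conjTranspose_mul_self B).1
  have hB : traceNorm B = ∑ i, √(H.eigenvalues i) := by
    rw [traceNorm, trace_psdSqrt (posSemidef_conjTranspose_mul_self B), Complex.re_sum]
    simp
  rw [trace_eq_sum_inner _ H.eigenvectorBasis, hB, Finset.mul_sum]
  refine (norm_sum_le _ _).trans (Finset.sum_le_sum fun i _ => ?_)
  rw [← norm_toEuclideanCLM_eigenvectorBasis, map_mul, mul_apply_eq_comp]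
  exact norm_inner_toEuclideanCLM_le _ (H.eigenvectorBasis.orthonormal.1 i) _

theorem PosSemidef.norm_trace_mul_le {ρ : Matrix n n ℂ} (hρ : ρ.PosSemidef) (M : Matrix n n ℂ) :
    ‖(ρ * M).trace‖ ≤ opNorm M * ρ.trace.re := by
  have htr : ρ.trace.re = ∑ i, hρ.1.eigenvalues i := by simp [hρ.1.trace_eq_sum_eigenvalues]
  rw [trace_mul_comm, trace_eq_sum_inner _ hρ.1.eigenvectorBasis, htr, Finset.mul_sum]
  refine (norm_sum_le _ _).trans (Finset.sum_le_sum fun i _ => ?_)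
  have hnorm := hρ.1.eigenvectorBasis.orthonormal.1 i
  rw [map_mul, mul_apply_eq_comp, hρ.1.toEuclideanCLM_eigenvectorBasis, map_smul,
    inner_smul_right, norm_mul, Complex.norm_real, Real.norm_of_nonneg (hρ.eigenvalues_nonneg i),
    mul_comm]
  refine mul_le_mul_of_nonneg_right ?_ (hρ.eigenvalues_nonneg i)
  simpa [hnorm] using norm_inner_toEuclideanCLM_le M hnorm (hρ.1.eigenvectorBasis i)

end TraceInequalities

section States

variable {n E : Type} [Fintype n] [DecidableEq n] [Fintype E] [DecidableEq E]

theorem norm_trace_sub_kronecker_partialTrace_mul_kronecker_le {ρ : Matrix (n × E) (n × E) ℂ}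
    (hρ : ρ.PosSemidef) (hρtr : ρ.trace = 1) (L : Matrix n n ℂ) (N : Matrix E E ℂ) :
    ‖((ρ - partialTraceRight ρ ⊗ₖ partialTraceLeft ρ) * (L ⊗ₖ N)).trace‖ ≤
      2 * (opNorm L * opNorm N) := by
  have hstate (X : Matrix (n × E) (n × E) ℂ) : ‖(ρ * X).trace‖ ≤ opNorm X := by
    simpa [hρtr] using hρ.norm_trace_mul_le X
  rw [Matrix.sub_mul, trace_sub, ← mul_kronecker_mul, trace_kronecker, ← trace_mul_kronecker_one,
    ← trace_mul_one_kronecker]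
  calc _ ≤ ‖(ρ * (L ⊗ₖ N)).trace‖ + ‖(ρ * (L ⊗ₖ 1)).trace‖ * ‖(ρ * (1 ⊗ₖ N)).trace‖ := by
        rw [← norm_mul]; exact norm_sub_le _ _
    _ ≤ opNorm L * opNorm N + opNorm L * opNorm N :=
        add_le_add ((hstate _).trans (opNorm_kronecker_le L N))
          (mul_le_mul ((hstate _).trans (opNorm_kronecker_one_le L))
            ((hstate _).trans (opNorm_one_kronecker_le N)) (norm_nonneg _) (opNorm_nonneg L))
    _ = 2 * (opNorm L * opNorm N) := by ring

end States

end Matrix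

theorem gapped_transfer_decoupling_general
    {d K : ℕ} {E : Type} [Fintype E] [DecidableEq E]
    (ν : ℝ)
    (lam : Fin (K + 1) → ℂ) (L R : Fin (K + 1) → Matrix (Fin d) (Fin d) ℂ)
    (hL0 : L 0 = 1)
    (hbi : ∀ k l, (L k * R l).trace = if k = l then 1 else 0)
    (hLnorm : ∀ k, opNorm (L k) ≤ 1) (hRnorm : ∀ k, traceNorm (R k) ≤ 1)
    (hgap : ∀ k, k ≠ 0 → ‖lam k‖ ≤ (2 : ℝ) ^ (-ν))
    (Φ : Matrix (Fin d) (Fin d) ℂ → Matrix (Fin d) (Fin d) ℂ)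
    (hΦ : ∀ O, Φ O = ∑ k, (lam k * (O * R k).trace) • L k)
    (ρ : Matrix (Fin d × E) (Fin d × E) ℂ) (hρ : ρ.PosSemidef) (hρtr : ρ.trace = 1)
    (m : ℕ) (hm : 1 ≤ m)
    (OA : Matrix (Fin d) (Fin d) ℂ) (OR : Matrix E E ℂ) :
    -- the marginals `ρ^A = tr_R ρ` and `ρ^R = tr_A ρ`
    let ρA : Matrix (Fin d) (Fin d) ℂ := Matrix.of fun a a' => ∑ e : E, ρ (a, e) (a', e)
    let ρR : Matrix E E ℂ := Matrix.of fun e e' => ∑ a : Fin d, ρ (a, e) (a, e')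
    ‖((ρ - ρA ⊗ₖ ρR) * ((Φ^[m] OA) ⊗ₖ OR)).trace‖
      ≤ 2 * K * opNorm OA * opNorm OR * (2 : ℝ) ^ (-(ν * m)) := by
  show ‖((ρ - partialTraceRight ρ ⊗ₖ partialTraceLeft ρ) * ((Φ^[m] OA) ⊗ₖ OR)).trace‖ ≤ _
  have hterm (k : Fin K) : ‖lam k.succ ^ m * (OA * R k.succ).trace *
      ((ρ - partialTraceRight ρ ⊗ₖ partialTraceLeft ρ) * (L k.succ ⊗ₖ OR)).trace‖ ≤
        ((2 : ℝ) ^ (-ν)) ^ m * opNorm OA * (2 * opNorm OR) := by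
    have hlam : ‖lam k.succ ^ m‖ ≤ ((2 : ℝ) ^ (-ν)) ^ m := by
      rw [norm_pow]; exact pow_le_pow_left₀ (norm_nonneg _) (hgap _ k.succ_ne_zero) m
    have hOA : ‖(OA * R k.succ).trace‖ ≤ opNorm OA :=
      (norm_trace_mul_le_opNorm_mul_traceNorm _ _).trans
        (mul_le_of_le_one_right (opNorm_nonneg _) (hRnorm _))
    have hcorr :=
      (norm_trace_sub_kronecker_partialTrace_mul_kronecker_le hρ hρtr (L k.succ) OR).trans
        (mul_le_mul_of_nonneg_left (mul_le_of_le_one_left (opNorm_nonneg _) (hLnorm _)) zero_le_two)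
    rw [norm_mul, norm_mul]
    exact mul_le_mul (mul_le_mul hlam hOA (norm_nonneg _) (by positivity)) hcorr (norm_nonneg _)
      (mul_nonneg (by positivity) (opNorm_nonneg _))
  rw [iterate_eq_sum_pow_smul lam L R hbi Φ hΦ hm, trace_mul_sum_smul_kronecker, Fin.sum_univ_succ,
    hL0, trace_sub_kronecker_partialTrace_mul_one_kronecker hρtr, mul_zero, zero_add]
  calc _ ≤ ∑ _k : Fin K, ((2 : ℝ) ^ (-ν)) ^ m * opNorm OA * (2 * opNorm OR) :=
        norm_sum_le_of_le _ fun k _ => hterm k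
    _ = _ := by
        rw [Finset.sum_const, Finset.card_univ, Fintype.card_fin, nsmul_eq_mul,
          ← Real.rpow_natCast, ← Real.rpow_mul zero_le_two]
        ring_nf

/-- spectral-gap decoupling estimate. For a gapped transfer operator `Φ`
with scaling dimension `ν`, any bipartite density matrix `ρ` on `ℂ^d ⊗ H_R`, and any `m ≥ 1`,
`|tr[(ρ − ρ^A ⊗ ρ^R)(Φ^m(O_A) ⊗ O_R)]| ≤ 2K ‖O_A‖ ‖O_R‖ 2^{−νm}`. -/
theorem gapped_transfer_decoupling
    {d K : ℕ} {E : Type} [Fintype E] [DecidableEq E]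
    (ν : ℝ) (hν : 0 < ν)
    (lam : Fin (K + 1) → ℂ) (L R : Fin (K + 1) → Matrix (Fin d) (Fin d) ℂ)
    (hlam0 : lam 0 = 1) (hL0 : L 0 = 1)
    (hbi : ∀ k l, (L k * R l).trace = if k = l then 1 else 0)
    (hLnorm : ∀ k, opNorm (L k) ≤ 1) (hRnorm : ∀ k, traceNorm (R k) ≤ 1)
    (hgap : ∀ k, k ≠ 0 → ‖lam k‖ ≤ (2 : ℝ) ^ (-ν))
    (Φ : Matrix (Fin d) (Fin d) ℂ → Matrix (Fin d) (Fin d) ℂ)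
    (hΦ : ∀ O, Φ O = ∑ k, (lam k * (O * R k).trace) • L k)
    (ρ : Matrix (Fin d × E) (Fin d × E) ℂ) (hρ : ρ.PosSemidef) (hρtr : ρ.trace = 1)
    (m : ℕ) (hm : 1 ≤ m)
    (OA : Matrix (Fin d) (Fin d) ℂ) (OR : Matrix E E ℂ) :
    -- the marginals `ρ^A = tr_R ρ` and `ρ^R = tr_A ρ`
    let ρA : Matrix (Fin d) (Fin d) ℂ := Matrix.of fun a a' => ∑ e : E, ρ (a, e) (a', e)
    let ρR : Matrix E E ℂ := Matrix.of fun e e' => ∑ a : Fin d, ρ (a, e) (a, e')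
    ‖((ρ - ρA ⊗ₖ ρR) * ((Φ^[m] OA) ⊗ₖ OR)).trace‖
      ≤ 2 * K * opNorm OA * opNorm OR * (2 : ℝ) ^ (-(ν * m)) :=
  gapped_transfer_decoupling_general ν lam L R hL0 hbi hLnorm hRnorm hgap Φ hΦ ρ hρ hρtr m hm OA OR
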